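/- arXiv:2406.18596 — 4 statements merged into one kernel-verified Lean document; each statement's English description precedes it below -/
import Mathlib

section
/- Let a, b > 0 and let y : ℕ → ℝ with y(n) > 0 for all n, satisfying the difference inequality y(n+1) - y(n) ≤ b - a·y(n+1) for all n ≥ n₀. Then for all n ≥ n₀, y(n) ≤ (b/a)·(1 + (a·y(n₀)/b - 1)·(1+a)^{-(n - n₀)}). -/
/-!
With `z n = y n - b / a` the difference inequality reads `(1 + a) z (n + 1) ≤ z n`, so the
deviation from the equilibrium `b / a` is dominated by the geometric sequence
`z n₀ (1 + a)⁻¹ ^ (n - n₀)`.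
-/

lemma le_pow_sub_mul_of_succ_le_mul {z : ℕ → ℝ} {r : ℝ} {n₀ : ℕ} (hr : 0 ≤ r)
    (h : ∀ n, n₀ ≤ n → z (n + 1) ≤ r * z n) :
    ∀ n, n₀ ≤ n → z n ≤ r ^ (n - n₀) * z n₀ := by
  intro n hn
  obtain ⟨k, rfl⟩ := Nat.exists_eq_add_of_le hn
  rw [Nat.add_sub_cancel_left]
  exact le_geom (u := fun k => z (n₀ + k)) hr k fun i _ => h (n₀ + i) (Nat.le_add_right n₀ i)

lemma sub_div_le_inv_one_add_mul_sub_div {a b u v : ℝ} (ha : 0 < a)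
    (h : v - u ≤ b - a * v) : v - b / a ≤ (1 + a)⁻¹ * (u - b / a) := by
  rw [← div_eq_inv_mul, le_div_iff₀ (by linarith), ← sub_nonneg]
  have key : (u - b / a) - (v - b / a) * (1 + a) = b - a * v - (v - u) := by
    field_simp
    ring
  linarith

theorem comparison_lemma_discrete_upper_general
    (a b : ℝ) (ha : 0 < a) (hb : 0 < b) (n₀ : ℕ)
    (y : ℕ → ℝ)
    (hineq : ∀ n, n₀ ≤ n → y (n + 1) - y n ≤ b - a * y (n + 1)) :
    ∀ n, n₀ ≤ n →
      y n ≤ (b / a) * (1 + (a * y n₀ / b - 1) * (1 + a) ^ (-((n : ℤ) - (n₀ : ℤ)))) := by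
  intro n hn
  have hdecay : y n - b / a ≤ (1 + a)⁻¹ ^ (n - n₀) * (y n₀ - b / a) :=
    le_pow_sub_mul_of_succ_le_mul (z := fun n => y n - b / a) (by positivity)
      (fun k hk => sub_div_le_inv_one_add_mul_sub_div ha (hineq k hk)) n hn
  have hzpow : (1 + a) ^ (-((n : ℤ) - (n₀ : ℤ))) = (1 + a)⁻¹ ^ (n - n₀) := by
    rw [← Nat.cast_sub hn, zpow_neg, zpow_natCast, inv_pow]
  have hrhs : (b / a) * (1 + (a * y n₀ / b - 1) * (1 + a)⁻¹ ^ (n - n₀))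
      = b / a + (1 + a)⁻¹ ^ (n - n₀) * (y n₀ - b / a) := by
    field_simp
  rw [hzpow, hrhs]
  linarith

theorem comparison_lemma_discrete_upper
    (a b : ℝ) (ha : 0 < a) (hb : 0 < b) (n₀ : ℕ)
    (y : ℕ → ℝ)
    (hpos : ∀ n, 0 < y n)
    (hineq : ∀ n, n₀ ≤ n → y (n + 1) - y n ≤ b - a * y (n + 1)) :
    ∀ n, n₀ ≤ n →
      y n ≤ (b / a) * (1 + (a * y n₀ / b - 1) * (1 + a) ^ (-((n : ℤ) - (n₀ : ℤ)))) :=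
  comparison_lemma_discrete_upper_general a b ha hb n₀ y hineq
end

section
/- Let a, b > 0 and let y : ℕ → ℝ with y(n) > 0 for all n, satisfying y(n+1) - y(n) ≥ b - a·y(n+1) for all n ≥ n₀. Then for all n ≥ n₀, y(n) ≥ (b/a)·(1 + (a·y(n₀)/b - 1)·(1+a)^{-(n - n₀)}). -/
/-!
The deviation `y n - b / a` from the equilibrium `b / a` shrinks by at most the factor
`1 + a` per step, so it stays above its initial value times `(1 + a) ^ (-(n - n₀))`.
-/

theorem mul_zpow_neg_le_of_le_mul_succ {K : Type*} [Field K] [LinearOrder K]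
    [IsStrictOrderedRing K] {c : K} (hc : 0 < c) {u : ℕ → K} {n₀ : ℕ}
    (h : ∀ n, n₀ ≤ n → u n ≤ c * u (n + 1)) :
    ∀ n, n₀ ≤ n → u n₀ * c ^ (-((n : ℤ) - n₀)) ≤ u n := by
  intro n hn
  induction n, hn using Nat.le_induction with
  | base => simp
  | succ m hm ih =>
    calc u n₀ * c ^ (-(((m + 1 : ℕ) : ℤ) - n₀))
        = u n₀ * c ^ (-((m : ℤ) - n₀)) / c := by
          rw [div_eq_mul_inv, mul_assoc, ← zpow_neg_one, ← zpow_add₀ hc.ne']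
          push_cast
          ring_nf
      _ ≤ u m / c := by gcongr
      _ ≤ u (m + 1) := (div_le_iff₀' hc).2 (h m hm)

theorem sub_div_le_one_add_mul_sub_div {K : Type*} [Field K] [LinearOrder K]
    [IsStrictOrderedRing K] {a b y y' : K} (ha : a ≠ 0) (h : y' - y ≥ b - a * y') :
    y - b / a ≤ (1 + a) * (y' - b / a) := by
  have hba : a * (b / a) = b := mul_div_cancel₀ b ha
  linear_combination h + hba

theorem comparison_lemma_discrete_lower_general
    (a b : ℝ) (ha : 0 < a) (hb : 0 < b) (n₀ : ℕ)
    (y : ℕ → ℝ)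
    (hineq : ∀ n, n₀ ≤ n → y (n + 1) - y n ≥ b - a * y (n + 1)) :
    ∀ n, n₀ ≤ n →
      y n ≥ (b / a) * (1 + (a * y n₀ / b - 1) * (1 + a) ^ (-((n : ℤ) - (n₀ : ℤ)))) := by
  intro n hn
  have hdev := mul_zpow_neg_le_of_le_mul_succ (by linarith : (0 : ℝ) < 1 + a)
    (u := fun n => y n - b / a)
    (fun m hm => sub_div_le_one_add_mul_sub_div ha.ne' (hineq m hm)) n hn
  have hrw : (b / a) * (1 + (a * y n₀ / b - 1) * (1 + a) ^ (-((n : ℤ) - n₀)))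
      = b / a + (y n₀ - b / a) * (1 + a) ^ (-((n : ℤ) - n₀)) := by
    field_simp
  rw [hrw]
  linarith

theorem comparison_lemma_discrete_lower
    (a b : ℝ) (ha : 0 < a) (hb : 0 < b) (n₀ : ℕ)
    (y : ℕ → ℝ)
    (hpos : ∀ n, 0 < y n)
    (hineq : ∀ n, n₀ ≤ n → y (n + 1) - y n ≥ b - a * y (n + 1)) :
    ∀ n, n₀ ≤ n →
      y n ≥ (b / a) * (1 + (a * y n₀ / b - 1) * (1 + a) ^ (-((n : ℤ) - (n₀ : ℤ)))) :=
  comparison_lemma_discrete_lower_general a b ha hb n₀ y hineq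
end

section
/- Consider the continuous SICA system as above with positive parameters and 0 < λL ≤ λ(t) ≤ λU. Let (S, I, C, A) be a positive solution. Then liminf_{t→∞} S(t) ≥ Λ/(βλU + ν). -/
/-!
Multiplying by the integrating factor `exp (k t)` turns a linear differential inequality
`f' ≥ a - k f` into monotonicity of `(f - a / k) exp (k t)`, so `f` stays above the solution
`a / k + (f 0 - a / k) exp (-k t)` of the comparison equation. For `S` take `k = β λU + ν`,
using `λ ≤ λU` and `S > 0`; the comparison solution tends to `Λ / (β λU + ν)`. The same argument
with `S' ≤ Λ - ν S` bounds `S` above, which keeps its `liminf` from being a junk value.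
-/

open Filter Real Topology

section LinearDifferentialInequality

variable {f f' : ℝ → ℝ} {a k : ℝ}

theorem add_mul_exp_le_of_sub_mul_le_deriv (hk : k ≠ 0)
    (hf : ∀ t, 0 ≤ t → HasDerivAt f (f' t) t) (h : ∀ t, 0 ≤ t → a - k * f t ≤ f' t) :
    ∀ t, 0 ≤ t → a / k + (f 0 - a / k) * exp (-(k * t)) ≤ f t := by
  set g : ℝ → ℝ := fun t => (f t - a / k) * exp (k * t)
  have hg : ∀ t, 0 ≤ t → HasDerivAt g ((f' t - (a - k * f t)) * exp (k * t)) t := by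
    intro t ht
    have hexp : HasDerivAt (fun t => exp (k * t)) (exp (k * t) * k) t := by
      simpa using ((hasDerivAt_id t).const_mul k).exp
    refine (((hf t ht).sub_const (a / k)).mul hexp).congr_deriv ?_
    linear_combination -exp (k * t) * div_mul_cancel₀ a hk
  have hmono : MonotoneOn g (Set.Ici 0) := by
    refine monotoneOn_of_hasDerivWithinAt_nonneg (convex_Ici 0)
      (fun t ht => (hg t ht).continuousAt.continuousWithinAt)
      (fun t ht => (hg t (interior_subset ht)).hasDerivWithinAt) fun t ht => ?_
    exact mul_nonneg (sub_nonneg.2 (h t (interior_subset ht))) (exp_pos _).le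
  intro t ht
  have hgt : g 0 ≤ g t := hmono Set.self_mem_Ici ht ht
  have hdecay : (f 0 - a / k) * exp (-(k * t)) ≤ f t - a / k := by
    rw [exp_neg, ← div_eq_mul_inv, div_le_iff₀ (exp_pos _)]
    simpa [g] using hgt
  linarith

theorem le_add_mul_exp_of_deriv_le_sub_mul (hk : k ≠ 0)
    (hf : ∀ t, 0 ≤ t → HasDerivAt f (f' t) t) (h : ∀ t, 0 ≤ t → f' t ≤ a - k * f t) :
    ∀ t, 0 ≤ t → f t ≤ a / k + (f 0 - a / k) * exp (-(k * t)) := by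
  intro t ht
  have := add_mul_exp_le_of_sub_mul_le_deriv (f := -f) (f' := -f') (a := -a) hk
    (fun t ht => (hf t ht).neg) (fun t ht => by simp only [Pi.neg_apply]; linarith [h t ht]) t ht
  simp only [Pi.neg_apply, neg_div] at this
  linarith

end LinearDifferentialInequality

theorem tendsto_add_mul_exp_neg_mul_atTop {k : ℝ} (hk : 0 < k) (c d : ℝ) :
    Tendsto (fun t => c + d * exp (-(k * t))) atTop (𝓝 c) := by
  have hexp : Tendsto (fun t => exp (-(k * t))) atTop (𝓝 0) :=
    tendsto_exp_atBot.comp (tendsto_neg_atTop_atBot.comp (tendsto_id.const_mul_atTop hk))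
  simpa using (hexp.const_mul d).const_add c

theorem Filter.Tendsto.le_liminf_of_eventually_le {α : Type*} {l : Filter α} [l.NeBot]
    {u v : α → ℝ} {c : ℝ} (hu : Tendsto u l (𝓝 c)) (huv : u ≤ᶠ[l] v)
    (hv : IsBoundedUnder (· ≤ ·) l v) : c ≤ liminf v l :=
  hu.liminf_eq ▸ liminf_le_liminf huv hu.isBoundedUnder_ge hv.isCoboundedUnder_ge

theorem sica_S_liminf_general
    (Λ β ν lL lU : ℝ)
    (hβ : 0 < β) (hν : 0 < ν)
    (S lam : ℝ → ℝ)
    (hlam : ∀ t, 0 ≤ t → lL ≤ lam t ∧ lam t ≤ lU)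
    (hlL : 0 < lL)
    (hS : ∀ t, 0 ≤ t → HasDerivAt S (Λ - β * lam t * S t - ν * S t) t)
    (hposS : ∀ t, 0 ≤ t → 0 < S t) :
    liminf S atTop ≥ Λ / (β * lU + ν) := by
  have hlU : 0 < lU := hlL.trans_le ((hlam 0 le_rfl).1.trans (hlam 0 le_rfl).2)
  have hk : 0 < β * lU + ν := by positivity
  have hlower := add_mul_exp_le_of_sub_mul_le_deriv (a := Λ) hk.ne' hS fun t ht => by
    nlinarith [mul_nonneg (mul_nonneg hβ.le (sub_nonneg.2 (hlam t ht).2)) (hposS t ht).le]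
  have hupper := le_add_mul_exp_of_deriv_le_sub_mul (a := Λ) hν.ne' hS fun t ht => by
    nlinarith [mul_nonneg (mul_nonneg hβ.le (hlL.le.trans (hlam t ht).1)) (hposS t ht).le]
  have hbdd : IsBoundedUnder (· ≤ ·) atTop S :=
    (tendsto_add_mul_exp_neg_mul_atTop hν _ _).isBoundedUnder_le.mono_le
      (eventually_atTop.2 ⟨0, hupper⟩)
  exact (tendsto_add_mul_exp_neg_mul_atTop hk _ _).le_liminf_of_eventually_le
    (eventually_atTop.2 ⟨0, hlower⟩) hbdd

theorem sica_S_liminf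
    (Λ β ν ρ φ γ ω d lL lU : ℝ)
    (hΛ : 0 < Λ) (hβ : 0 < β) (hν : 0 < ν) (hρ : 0 < ρ) (hφ : 0 < φ)
    (hγ : 0 < γ) (hω : 0 < ω) (hd : 0 < d)
    (S I C A lam : ℝ → ℝ)
    (hlam : ∀ t, 0 ≤ t → lL ≤ lam t ∧ lam t ≤ lU)
    (hlL : 0 < lL)
    (hS : ∀ t, 0 ≤ t → HasDerivAt S (Λ - β * lam t * S t - ν * S t) t)
    (hI : ∀ t, 0 ≤ t →
      HasDerivAt I (β * lam t * S t - (ρ + φ + ν) * I t + γ * A t + ω * C t) t)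
    (hC : ∀ t, 0 ≤ t → HasDerivAt C (φ * I t - (ω + ν) * C t) t)
    (hA : ∀ t, 0 ≤ t → HasDerivAt A (ρ * I t - (γ + ν + d) * A t) t)
    (hposS : ∀ t, 0 ≤ t → 0 < S t) (hposI : ∀ t, 0 ≤ t → 0 < I t)
    (hposC : ∀ t, 0 ≤ t → 0 < C t) (hposA : ∀ t, 0 ≤ t → 0 < A t) :
    liminf S atTop ≥ Λ / (β * lU + ν) :=
  sica_S_liminf_general Λ β ν lL lU hβ hν S lam hlam hlL hS hposS
end

section
/- Consider the continuous SICA system with positive parameters, 0 < λL ≤ λ(t) ≤ λU, and a positive solution (S, I, C, A). Suppose liminf_{t→∞} I(t) ≥ m₂ for some m₂ > 0. Then liminf_{t→∞} C(t) ≥ φ·m₂/(ω+ν) and liminf_{t→∞} A(t) ≥ ρ·m₂/(γ+ν+d). -/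
open Filter Set Real Topology

/-!
Each of `C` and `A` obeys a linear equation `x' = a y - k x` driven by `y = I`. Multiplying by the
integrating factor `exp (k t)` shows that once `a y ≥ L` the solution satisfies
`k x t - L ≥ (k x T - L) exp (-k (t - T))`, so every limit point of `x` is at least `L / k`;
letting `L` increase to `a · liminf I` gives the bounds. The same comparison, applied to the total
population `N = S + I + C + A` with `N' = Λ - ν N - d A ≤ Λ - ν N`, shows that `C` and `A` are
bounded, which is what makes their `liminf`s meaningful.
-/

section IntegratingFactor

variable {x v : ℝ → ℝ} {k L T : ℝ}

lemma monotoneOn_exp_mul_sub_of_le_deriv_add (hk : 0 ≤ k)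
    (hx : ∀ t ≥ T, HasDerivAt x (v t) t) (hv : ∀ t ≥ T, L ≤ v t + k * x t) :
    MonotoneOn (fun t => exp (k * t) * (k * x t - L)) (Ici T) := by
  have hderiv : ∀ t ≥ T, HasDerivAt (fun t => exp (k * t) * (k * x t - L))
      (k * exp (k * t) * (v t + k * x t - L)) t := by
    intro t ht
    refine (((hasDerivAt_id t).const_mul k).exp.mul
      (((hx t ht).const_mul k).sub_const L)).congr_deriv ?_
    simp only [id, mul_one]
    ring
  refine monotoneOn_of_deriv_nonneg (convex_Ici T)
    (fun t ht => (hderiv t ht).continuousAt.continuousWithinAt) ?_ ?_ <;> rw [interior_Ici]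
  · exact fun t ht => (hderiv t ht.le).differentiableAt.differentiableWithinAt
  · intro t ht
    rw [(hderiv t ht.le).deriv]
    exact mul_nonneg (mul_nonneg hk (exp_pos _).le) (by linarith [hv t ht.le])

lemma exp_mul_sub_le_of_le_deriv_add (hk : 0 ≤ k)
    (hx : ∀ t ≥ T, HasDerivAt x (v t) t) (hv : ∀ t ≥ T, L ≤ v t + k * x t)
    {t : ℝ} (ht : T ≤ t) :
    exp (-(k * (t - T))) * (k * x T - L) ≤ k * x t - L := by
  have hmono := monotoneOn_exp_mul_sub_of_le_deriv_add hk hx hv self_mem_Ici ht ht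
  have hexp : exp (-(k * (t - T))) = exp (k * T) / exp (k * t) := by
    rw [← exp_sub]; ring_nf
  rw [hexp, div_mul_eq_mul_div, div_le_iff₀ (exp_pos _)]
  linarith

lemma isBoundedUnder_le_of_deriv_add_le (hk : 0 < k)
    (hx : ∀ t ≥ T, HasDerivAt x (v t) t) (hv : ∀ t ≥ T, v t + k * x t ≤ L) :
    IsBoundedUnder (· ≤ ·) atTop x := by
  refine isBoundedUnder_of_eventually_le (a := (L + |k * x T - L|) / k) ?_
  filter_upwards [eventually_ge_atTop T] with t ht
  have hlower := exp_mul_sub_le_of_le_deriv_add (x := -x) (v := -v) (L := -L) hk.le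
    (fun t ht => (hx t ht).neg) (fun t ht => by simp only [Pi.neg_apply]; linarith [hv t ht]) ht
  have hexp : exp (-(k * (t - T))) ≤ 1 :=
    exp_le_one_iff.mpr (neg_nonpos.mpr (mul_nonneg hk.le (sub_nonneg.mpr ht)))
  have habs : exp (-(k * (t - T))) * (k * x T - L) ≤ |k * x T - L| :=
    calc exp (-(k * (t - T))) * (k * x T - L) ≤ exp (-(k * (t - T))) * |k * x T - L| :=
          mul_le_mul_of_nonneg_left (le_abs_self _) (exp_pos _).le
      _ ≤ |k * x T - L| := mul_le_of_le_one_left (abs_nonneg _) hexp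
  simp only [Pi.neg_apply] at hlower
  rw [le_div_iff₀ hk]
  linarith

lemma div_le_liminf_of_le_deriv_add (hk : 0 < k)
    (hx : ∀ᶠ t in atTop, HasDerivAt x (v t) t) (hv : ∀ᶠ t in atTop, L ≤ v t + k * x t)
    (hbdd : IsBoundedUnder (· ≤ ·) atTop x) :
    L / k ≤ liminf x atTop := by
  obtain ⟨T, hT⟩ := (hx.and hv).exists_forall_of_atTop
  set lower : ℝ → ℝ := fun t => (L + exp (-(k * (t - T))) * (k * x T - L)) / k
  have hlower : ∀ᶠ t in atTop, lower t ≤ x t := by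
    filter_upwards [eventually_ge_atTop T] with t ht
    rw [div_le_iff₀ hk]
    linarith [exp_mul_sub_le_of_le_deriv_add hk.le (fun t ht => (hT t ht).1)
      (fun t ht => (hT t ht).2) ht]
  have hdecay : Tendsto (fun t => exp (-(k * (t - T)))) atTop (𝓝 0) :=
    tendsto_exp_neg_atTop_nhds_zero.comp
      ((tendsto_atTop_add_const_right _ (-T) tendsto_id).const_mul_atTop hk)
  have htend : Tendsto lower atTop (𝓝 (L / k)) := by
    simpa using ((hdecay.mul_const (k * x T - L)).const_add L).div_const k
  calc L / k = liminf lower atTop := htend.liminf_eq.symm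
    _ ≤ liminf x atTop :=
      liminf_le_liminf hlower htend.isBoundedUnder_ge hbdd.isCoboundedUnder_ge

end IntegratingFactor

lemma mul_div_le_liminf_of_hasDerivAt {x y : ℝ → ℝ} {a k m : ℝ} (ha : 0 < a) (hk : 0 < k)
    (hx : ∀ t ≥ 0, HasDerivAt x (a * y t - k * x t) t)
    (hxbdd : IsBoundedUnder (· ≤ ·) atTop x) (hybdd : IsBoundedUnder (· ≥ ·) atTop y)
    (hm : m ≤ liminf y atTop) :
    a * m / k ≤ liminf x atTop := by
  refine le_of_forall_lt_imp_le_of_dense fun c hc => ?_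
  have hcm : c * k / a < liminf y atTop := by
    refine lt_of_lt_of_le ?_ hm
    rwa [div_lt_iff₀ ha, mul_comm m, ← lt_div_iff₀ hk]
  have hy := eventually_lt_of_lt_liminf hcm hybdd
  have key := div_le_liminf_of_le_deriv_add (L := c * k) hk
    (eventually_ge_atTop 0 |>.mono hx) (hy.mono fun t ht => ?_) hxbdd
  · rwa [mul_div_cancel_right₀ _ hk.ne'] at key
  · rw [div_lt_iff₀' ha] at ht
    linarith

theorem sica_cascade_liminf_general
    (Λ β ν ρ φ γ ω d m₂ : ℝ)
    (hν : 0 < ν) (hρ : 0 < ρ) (hφ : 0 < φ)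
    (hγ : 0 < γ) (hω : 0 < ω) (hd : 0 < d)
    (S I C A lam : ℝ → ℝ)
    (hS : ∀ t, 0 ≤ t → HasDerivAt S (Λ - β * lam t * S t - ν * S t) t)
    (hI : ∀ t, 0 ≤ t →
      HasDerivAt I (β * lam t * S t - (ρ + φ + ν) * I t + γ * A t + ω * C t) t)
    (hC : ∀ t, 0 ≤ t → HasDerivAt C (φ * I t - (ω + ν) * C t) t)
    (hA : ∀ t, 0 ≤ t → HasDerivAt A (ρ * I t - (γ + ν + d) * A t) t)
    (hposS : ∀ t, 0 ≤ t → 0 < S t) (hposI : ∀ t, 0 ≤ t → 0 < I t)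
    (hposC : ∀ t, 0 ≤ t → 0 < C t) (hposA : ∀ t, 0 ≤ t → 0 < A t)
    (hIlim : liminf I atTop ≥ m₂) :
    liminf C atTop ≥ φ * m₂ / (ω + ν) ∧
      liminf A atTop ≥ ρ * m₂ / (γ + ν + d) := by
  have hN : IsBoundedUnder (· ≤ ·) atTop fun t => S t + I t + C t + A t :=
    isBoundedUnder_le_of_deriv_add_le (L := Λ) hν
      (fun t ht => (((hS t ht).add (hI t ht)).add (hC t ht)).add (hA t ht))
      (fun t ht => by linarith [mul_pos hd (hposA t ht)])
  have hCbdd : IsBoundedUnder (· ≤ ·) atTop C := hN.mono_le <| by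
    filter_upwards [eventually_ge_atTop 0] with t ht
    linarith [hposS t ht, hposI t ht, hposA t ht]
  have hAbdd : IsBoundedUnder (· ≤ ·) atTop A := hN.mono_le <| by
    filter_upwards [eventually_ge_atTop 0] with t ht
    linarith [hposS t ht, hposI t ht, hposC t ht]
  have hIbdd : IsBoundedUnder (· ≥ ·) atTop I := isBoundedUnder_of_eventually_ge <| by
    filter_upwards [eventually_ge_atTop 0] with t ht using (hposI t ht).le
  exact ⟨mul_div_le_liminf_of_hasDerivAt hφ (by positivity) hC hCbdd hIbdd hIlim,
    mul_div_le_liminf_of_hasDerivAt hρ (by positivity) hA hAbdd hIbdd hIlim⟩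

theorem sica_cascade_liminf
    (Λ β ν ρ φ γ ω d lL lU m₂ : ℝ)
    (hΛ : 0 < Λ) (hβ : 0 < β) (hν : 0 < ν) (hρ : 0 < ρ) (hφ : 0 < φ)
    (hγ : 0 < γ) (hω : 0 < ω) (hd : 0 < d) (hm₂ : 0 < m₂)
    (S I C A lam : ℝ → ℝ)
    (hlam : ∀ t, 0 ≤ t → lL ≤ lam t ∧ lam t ≤ lU)
    (hlL : 0 < lL)
    (hS : ∀ t, 0 ≤ t → HasDerivAt S (Λ - β * lam t * S t - ν * S t) t)
    (hI : ∀ t, 0 ≤ t →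
      HasDerivAt I (β * lam t * S t - (ρ + φ + ν) * I t + γ * A t + ω * C t) t)
    (hC : ∀ t, 0 ≤ t → HasDerivAt C (φ * I t - (ω + ν) * C t) t)
    (hA : ∀ t, 0 ≤ t → HasDerivAt A (ρ * I t - (γ + ν + d) * A t) t)
    (hposS : ∀ t, 0 ≤ t → 0 < S t) (hposI : ∀ t, 0 ≤ t → 0 < I t)
    (hposC : ∀ t, 0 ≤ t → 0 < C t) (hposA : ∀ t, 0 ≤ t → 0 < A t)
    (hIlim : liminf I atTop ≥ m₂) :
    liminf C atTop ≥ φ * m₂ / (ω + ν) ∧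
      liminf A atTop ≥ ρ * m₂ / (γ + ν + d) :=
  sica_cascade_liminf_general Λ β ν ρ φ γ ω d m₂ hν hρ hφ hγ hω hd S I C A lam hS hI hC hA hposS
    hposI hposC hposA hIlim
end
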